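/- Let A be an abelian category and 0 → X_n → C_{n-1} → ⋯ → C_0 → X_0 → 0 an exact sequence such that Ext^i(X_0, C_j) = 0 for 0 < i ≤ n−1 and all j. Then the Yoneda class of the sequence in Ext^n(X_0, X_n) is zero if and only if the map C_0 → X_0 is a split epimorphism. -/

import Mathlib

/-!
STATEMENT 19: Let A be an abelian category and 0 → X_n → C_{n-1} → ⋯ → C_0 → X_0 → 0
an exact sequence.  Given Ext^i(X_0, C_j) = 0 for 0 < i ≤ n−1 and all j, the Yoneda
class of the sequence in Ext^n(X_0, X_n) is zero if and only if the map C_0 → X_0 is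
a split epimorphism.

The sequence is encoded by its short exact pieces `0 → X_{i+1} → C_i → X_i → 0`
(0 ≤ i < n); its Yoneda class is the composition (in the sense of Yoneda Ext) of the
degree-one extension classes of the pieces.
-/

open CategoryTheory CategoryTheory.Abelian

namespace Stmt19

variable {A : Type*} [Category A] [Abelian A] [HasExt.{0} A]

/-- The Yoneda class of a long exact sequence, obtained by composing the degree-one
extension classes `ec i ∈ Ext (X i) (X (i+1)) 1` of its short exact pieces. -/
noncomputable def yclass (X : ℕ → A) (ec : ∀ i, Ext (X i) (X (i + 1)) 1) :
    ∀ m : ℕ, Ext (X 0) (X m) m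
  | 0 => Ext.mk₀ (𝟙 (X 0))
  | m + 1 => (yclass X ec m).comp (ec m) rfl

section Aux

variable {A : Type*} [Category A] [Abelian A] [HasExt.{0} A]

/-- If the extension class of a short exact sequence vanishes, the epimorphism splits. -/
lemma isSplitEpi_of_extClass_eq_zero {S : ShortComplex A} (hS : S.ShortExact)
    (h : hS.extClass = 0) : IsSplitEpi S.g := by
  letI := HasDerivedCategory.standard A
  have hδ : hS.singleδ = 0 := by
    rw [← hS.extClass_hom, h, Ext.zero_hom]
  obtain ⟨σ, hσ⟩ := Pretriangulated.Triangle.coyoneda_exact₃ _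
    hS.singleTriangle_distinguished (𝟙 ((DerivedCategory.singleFunctor A 0).obj S.X₃))
    (by rw [ShortComplex.ShortExact.singleTriangle_mor₃, hδ]; exact Limits.comp_zero)
  have hσ' : σ ≫ (DerivedCategory.singleFunctor A 0).map S.g = 𝟙 _ := hσ.symm
  let F := DerivedCategory.homologyFunctor A 0
  let e1 : DerivedCategory.singleFunctor A 0 ≅ CochainComplex.singleFunctor A 0 ⋙
      DerivedCategory.Q :=
    (SingleFunctors.evaluation _ _ 0).mapIso (DerivedCategory.singleFunctorsPostcompQIso A)
  let e : DerivedCategory.singleFunctor A 0 ⋙ F ≅ 𝟭 A :=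
    Functor.isoWhiskerRight e1 F ≪≫ Functor.associator _ _ _ ≪≫
      Functor.isoWhiskerLeft (CochainComplex.singleFunctor A 0)
        (DerivedCategory.homologyFunctorFactors A 0) ≪≫
      HomologicalComplex.homologyFunctorSingleIso A (ComplexShape.up ℤ) 0
  refine ⟨⟨⟨e.inv.app S.X₃ ≫ F.map σ ≫ e.hom.app S.X₂, ?_⟩⟩⟩
  have hnat := e.hom.naturality S.g
  dsimp at hnat
  let σ' : (DerivedCategory.singleFunctor A 0).obj S.X₃ ⟶ (DerivedCategory.singleFunctor A 0).obj S.X₂ := σ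
  have hσ'' : σ' ≫ (DerivedCategory.singleFunctor A 0).map S.g = 𝟙 _ := hσ'
  change (e.inv.app S.X₃ ≫ F.map σ' ≫ e.hom.app S.X₂) ≫ S.g = 𝟙 S.X₃
  clear_value σ'
  rw [Category.assoc, Category.assoc, ← hnat, ← Functor.map_comp_assoc, hσ'']
  simp

/-- Conversely, if the epimorphism splits then the extension class vanishes. -/
lemma extClass_eq_zero_of_isSplitEpi {S : ShortComplex A} (hS : S.ShortExact)
    (h : IsSplitEpi S.g) : hS.extClass = 0 := by
  calc hS.extClass = (Ext.mk₀ (𝟙 S.X₃)).comp hS.extClass (zero_add 1) :=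
        (Ext.mk₀_id_comp _).symm
    _ = (Ext.mk₀ (section_ S.g ≫ S.g)).comp hS.extClass (zero_add 1) := by
        rw [IsSplitEpi.id]
    _ = (Ext.mk₀ (section_ S.g)).comp ((Ext.mk₀ S.g).comp hS.extClass (zero_add 1))
          (zero_add 1) := by rw [Ext.mk₀_comp_mk₀_assoc]
    _ = 0 := by rw [hS.comp_extClass, Ext.comp_zero]

/-- Dimension shifting: composition with the extension class is injective when the
relevant `Ext`-group of the middle term vanishes. -/
lemma comp_extClass_injective {S : ShortComplex A} (hS : S.ShortExact) (T : A)
    {n₀ n₁ : ℕ} (h : n₀ + 1 = n₁) (hsub : Subsingleton (Ext T S.X₂ n₀)) :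
    Function.Injective (fun x : Ext T S.X₃ n₀ => x.comp hS.extClass h) := by
  have : Function.Injective (hS.extClass.postcomp T (show n₀ + 1 = n₁ from h)) := by
    rw [injective_iff_map_eq_zero]
    intro x hx
    obtain ⟨y, hy⟩ := Ext.covariant_sequence_exact₃ T hS x h hx
    rw [Subsingleton.elim y 0, Ext.zero_comp] at hy
    exact hy.symm
  exact this

end Aux

theorem yoneda_class_zero_iff_split_epi
    (n : ℕ) (hn : 1 ≤ n)
    (X : ℕ → A) (Cc : ℕ → A)
    (f : ∀ i, X (i + 1) ⟶ Cc i) (g : ∀ i, Cc i ⟶ X i)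
    (w : ∀ i, f i ≫ g i = 0)
    (hS : ∀ i, i < n → (ShortComplex.mk (f i) (g i) (w i)).ShortExact)
    (ec : ∀ i, Ext (X i) (X (i + 1)) 1)
    (hec : ∀ i (h : i < n), ec i = (hS i h).extClass)
    (hvanish : ∀ i : ℕ, 0 < i → i + 1 ≤ n → ∀ j, j < n → Subsingleton (Ext (X 0) (Cc j) i)) :
    yclass X ec n = 0 ↔ IsSplitEpi (g 0) := by
  have key : ∀ m, 1 ≤ m → m ≤ n → (yclass X ec m = 0 ↔ ec 0 = 0) := by
    intro m
    induction m with
    | zero => intro h; omega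
    | succ m ih =>
      intro _ h2
      by_cases hm : m = 0
      · subst hm
        have h1 : yclass X ec 1 = ec 0 := by
          show (yclass X ec 0).comp (ec 0) rfl = ec 0
          show (Ext.mk₀ (𝟙 (X 0))).comp (ec 0) rfl = ec 0
          exact Ext.mk₀_id_comp _
        rw [h1]
      · have hm1 : 1 ≤ m := by omega
        have hmn : m < n := by omega
        have hsub : Subsingleton (Ext (X 0) (Cc m) m) :=
          hvanish m (by omega) (by omega) m hmn
        have hinj : Function.Injective
            (fun x : Ext (X 0) (X m) m => x.comp (ec m) rfl) := by
          rw [hec m hmn]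
          exact comp_extClass_injective (hS m hmn) _ rfl hsub
        have hy : yclass X ec (m + 1) = (yclass X ec m).comp (ec m) rfl := rfl
        constructor
        · intro h0
          have hz : yclass X ec m = 0 := by
            apply hinj
            show (yclass X ec m).comp (ec m) rfl = (0 : Ext (X 0) (X m) m).comp (ec m) rfl
            rw [← hy, h0, Ext.zero_comp]
          exact (ih hm1 hmn.le).1 hz
        · intro h0
          rw [hy, (ih hm1 hmn.le).2 h0, Ext.zero_comp]
  have h0n : 0 < n := hn
  rw [key n hn le_rfl, hec 0 h0n]
  exact ⟨fun h => isSplitEpi_of_extClass_eq_zero (hS 0 h0n) h,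
    fun h => extClass_eq_zero_of_isSplitEpi (hS 0 h0n) h⟩

end Stmt19
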